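/- If X is a half-synchronized subshift, then its star-studded version X* is half-synchronized, and any half-synchronizing word of X is also a half-synchronizing word of X*; moreover if X is synchronized then X* is synchronized, with any nonempty synchronizing word of X synchronizing for X*. -/

import Mathlib

namespace Paper

variable {A B C : Type*}

def shiftMap (x : ℤ → A) : ℤ → A := fun i => x (i + 1)

def shiftInvMap (x : ℤ → A) : ℤ → A := fun i => x (i - 1)

/-- A subshift: nonempty, shift-invariant (both directions), and closed
(expressed combinatorially: any configuration all of whose central patterns
are approximated by members is a member). -/
def IsSubshift (X : Set (ℤ → A)) : Prop :=
  X.Nonempty ∧ (∀ x ∈ X, shiftMap x ∈ X) ∧ (∀ x ∈ X, shiftInvMap x ∈ X) ∧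
  ∀ x : ℤ → A, (∀ n : ℕ, ∃ y ∈ X, ∀ i : ℤ, |i| ≤ (n : ℤ) → y i = x i) → x ∈ X

/-- The word `x[i, i+k-1]`. -/
def cfgWord (x : ℤ → A) (i : ℤ) (k : ℕ) : List A :=
  List.ofFn (fun t : Fin k => x (i + ((t : ℕ) : ℤ)))

/-- The language of a set of configurations. -/
def lang (X : Set (ℤ → A)) : Set (List A) := {w | ∃ x ∈ X, ∃ i : ℤ, cfgWord x i w.length = w}

def TransitiveShift (X : Set (ℤ → A)) : Prop :=
  ∀ u ∈ lang X, ∀ v ∈ lang X, ∃ w : List A, u ++ w ++ v ∈ lang X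

/-- Left ray of a configuration: `leftRay x n = x (-1-n)`. -/
def leftRay (x : ℤ → A) : ℕ → A := fun n => x (-1 - (n : ℤ))

def rightRay (x : ℤ → A) : ℕ → A := fun n => x (n : ℤ)

def LeftRays (X : Set (ℤ → A)) : Set (ℕ → A) := leftRay '' X

def RightRays (X : Set (ℤ → A)) : Set (ℕ → A) := rightRay '' X

/-- Glue a left ray and a right ray into a configuration. -/
def glue (l r : ℕ → A) : ℤ → A := fun i => if 0 ≤ i then r i.toNat else l (-1 - i).toNat

/-- Follower set of a left-infinite sequence. -/
def foll (X : Set (ℤ → A)) (l : ℕ → A) : Set (ℕ → A) := {r | glue l r ∈ X}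

def wordThen (w : List A) (r : ℕ → A) : ℕ → A :=
  fun n => if h : n < w.length then w.get ⟨n, h⟩ else r (n - w.length)

/-- Follower set of a word. -/
def follW (X : Set (ℤ → A)) (w : List A) : Set (ℕ → A) := {r | wordThen w r ∈ RightRays X}

def occursInLeft (l : ℕ → A) (w : List A) : Prop :=
  ∃ j : ℕ, ∀ k : Fin w.length, l (j + (w.length - 1 - (k : ℕ))) = w.get k

/-- The language of a left-infinite sequence. -/
def langL (l : ℕ → A) : Set (List A) := {w | occursInLeft l w}

/-- The left ray `l` ends with the word `w`. -/
def raySuffix (l : ℕ → A) (w : List A) : Prop :=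
  ∀ k : Fin w.length, l (w.length - 1 - (k : ℕ)) = w.get k

def HalfSyncWord (X : Set (ℤ → A)) (w : List A) : Prop :=
  w ∈ lang X ∧ ∃ l ∈ LeftRays X, raySuffix l w ∧ langL l = lang X ∧ foll X l = follW X w

def HalfSynchronized (X : Set (ℤ → A)) : Prop := TransitiveShift X ∧ ∃ w, HalfSyncWord X w

def SyncWord (X : Set (ℤ → A)) (w : List A) : Prop :=
  w ∈ lang X ∧ ∀ l ∈ LeftRays X, raySuffix l w → foll X l = follW X w

def Synchronized (X : Set (ℤ → A)) : Prop := TransitiveShift X ∧ ∃ w, SyncWord X w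

/-- Product of two subshifts, over the product alphabet. -/
def prodShift (Y : Set (ℤ → B)) (Z : Set (ℤ → C)) : Set (ℤ → B × C) :=
  {x | (fun i => (x i).1) ∈ Y ∧ (fun i => (x i).2) ∈ Z}

/-- Identification of a pair of sets of right rays with a set of right rays
over the product alphabet. -/
def prodRaySet (S : Set (ℕ → B)) (T : Set (ℕ → C)) : Set (ℕ → B × C) :=
  {r | (fun n => (r n).1) ∈ S ∧ (fun n => (r n).2) ∈ T}

/-- Extend a left ray by one more symbol on the right. -/
def extendRay (l : ℕ → A) (a : A) : ℕ → A := fun n => if n = 0 then a else l (n - 1)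

/-- Edge of the Krieger graph from `u` to `v` labeled `a`. -/
def KEdge (X : Set (ℤ → A)) (u : Set (ℕ → A)) (a : A) (v : Set (ℕ → A)) : Prop :=
  ∃ l ∈ LeftRays X, extendRay l a ∈ LeftRays X ∧ u = foll X l ∧ v = foll X (extendRay l a)

def KStep (X : Set (ℤ → A)) (u v : Set (ℕ → A)) : Prop := ∃ a, KEdge X u a v

/-- Existence of a finite path in the Krieger graph. -/
def KReach (X : Set (ℤ → A)) : Set (ℕ → A) → Set (ℕ → A) → Prop :=
  Relation.ReflTransGen (KStep X)

def KVertex (X : Set (ℤ → A)) (v : Set (ℕ → A)) : Prop := ∃ l ∈ LeftRays X, v = foll X l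

/-- A subshift is sofic iff it has finitely many follower sets. -/
def Sofic (X : Set (ℤ → A)) : Prop := {v : Set (ℕ → A) | KVertex X v}.Finite

/-- Vertex of the Fischer graph (w.r.t. half-synchronizing word `w`): a vertex of the
Krieger graph in the maximal strongly connected subgraph containing `foll w`. -/
def FVertex (X : Set (ℤ → A)) (w : List A) (v : Set (ℕ → A)) : Prop :=
  KVertex X v ∧ KReach X (follW X w) v ∧ KReach X v (follW X w)

/-- Directed (multi)graph with vertex type `V` and edge type `E`. -/
structure DiGraph (V : Type*) (E : Type*) where
  ini : E → V
  ter : E → V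

variable {V E V' E' : Type*}

/-- Bi-infinite path on a graph. -/
def BiPath (G : DiGraph V E) (x : ℤ → E) : Prop := ∀ i : ℤ, G.ter (x i) = G.ini (x (i + 1))

/-- `p` is a finite path of `m+1` edges. -/
def FinPath (G : DiGraph V E) (m : ℕ) (p : Fin (m + 1) → E) : Prop :=
  ∀ k : Fin m, G.ter (p k.castSucc) = G.ini (p k.succ)

/-- The subpath `x[i, i+n]` of a bi-infinite path is a shortest path between its endpoints. -/
def GeodesicSeg (G : DiGraph V E) (x : ℤ → E) (i : ℤ) (n : ℕ) : Prop :=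
  ∀ (m : ℕ) (p : Fin (m + 1) → E), FinPath G m p →
    G.ini (p 0) = G.ini (x i) → G.ter (p (Fin.last m)) = G.ter (x (i + (n : ℤ))) → n ≤ m

def EvGeodesic (G : DiGraph V E) (x : ℤ → E) : Prop :=
  ∃ i₀ : ℤ, ∀ i : ℤ, i₀ ≤ i → ∀ n : ℕ, GeodesicSeg G x i n

/-- Strictly proximal pair of bi-infinite paths. -/
def StrictProxPair (x y : ℤ → E) : Prop :=
  (∀ n : ℕ, ∃ i : ℕ, ∀ k : ℕ, k ≤ n → x ((i : ℤ) + (k : ℤ)) = y ((i : ℤ) + (k : ℤ))) ∧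
  ∀ N : ℕ, ∃ i : ℕ, N ≤ i ∧ x ((i : ℕ) : ℤ) ≠ y ((i : ℕ) : ℤ)

def HasEvGeoProxPair (G : DiGraph V E) : Prop :=
  ∃ x y : ℤ → E, BiPath G x ∧ BiPath G y ∧ EvGeodesic G x ∧ EvGeodesic G y ∧ StrictProxPair x y

/-- Edges of the Fischer graph: Krieger edges between Fischer vertices. -/
def FischerE (X : Set (ℤ → A)) (w : List A) : Type _ :=
  {t : Set (ℕ → A) × A × Set (ℕ → A) //
    FVertex X w t.1 ∧ FVertex X w t.2.2 ∧ KEdge X t.1 t.2.1 t.2.2}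

def FischerGraph (X : Set (ℤ → A)) (w : List A) : DiGraph (Set (ℕ → A)) (FischerE X w) :=
  ⟨fun e => e.1.1, fun e => e.1.2.2⟩

def SlidingBlockCode (X : Set (ℤ → A)) (F : (ℤ → A) → (ℤ → B)) : Prop :=
  ∃ (r : ℕ) (f : (Fin (2 * r + 1) → A) → B),
    ∀ x ∈ X, ∀ i : ℤ, F x i = f (fun k => x (i + ((k : ℕ) : ℤ) - (r : ℤ)))

def ShiftConjugate (X : Set (ℤ → A)) (Y : Set (ℤ → B)) : Prop :=
  ∃ F : (ℤ → A) → (ℤ → B), SlidingBlockCode X F ∧ Set.InjOn F X ∧ F '' X = Y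

def DirectPrime (X : Set (ℤ → A)) : Prop :=
  ∀ (B C : Type) (_ : Finite B) (_ : Finite C) (Y : Set (ℤ → B)) (Z : Set (ℤ → C)),
    IsSubshift Y → IsSubshift Z → ShiftConjugate X (prodShift Y Z) →
    (∃ y, Y = {y}) ∨ (∃ z, Z = {z})

/-- The star-studded version of a subshift: configurations of `X` with `*` (here `none`)
interleaved so that no two consecutive `*` occur. -/
def starShift (X : Set (ℤ → A)) : Set (ℤ → Option A) :=
  {x | (∀ i : ℤ, ¬ (x i = none ∧ x (i + 1) = none)) ∧
       ∀ (i : ℤ) (k : ℕ), (cfgWord x i k).reduceOption ∈ lang X}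
/-!
A configuration of `X*` is a configuration of `X` with stars inserted, never two in a row. Cut at
the origin, its two rays are star insertions into the two rays of a configuration of `X`, and
conversely two such insertions glue to a configuration of `X*` unless both rays start with a star.
Hence for a left ray ending with the unstarred word `w`, its follower set in `X*` consists of the
star insertions into its follower set in `X`; this carries synchronizing words of `X` over to `X*`.

For a half-synchronizing word `w` with witness ray `l`, stars are inserted into `l` only far to the
left of `w`. Every word of `X` occurs arbitrarily far out in `l`, so the star pattern of any word of
`X*` can be copied onto a window of `l` in which its letters occur; treating the countably many
words of `X*` one after the other on disjoint windows gives a left ray of `X*` whose language is all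
of `L(X*)`. Transitivity passes to `X*` by joining two words with an unstarred bridge from `X`.
-/

section Words

variable {α : Type*}

@[simp] lemma length_cfgWord (x : ℤ → α) (i : ℤ) (k : ℕ) : (cfgWord x i k).length = k := by
  simp [cfgWord]

@[simp] lemma getElem_cfgWord (x : ℤ → α) (i : ℤ) (k t : ℕ) (ht : t < (cfgWord x i k).length) :
    (cfgWord x i k)[t] = x (i + t) := by
  simp [cfgWord]

lemma cfgWord_add (x : ℤ → α) (i : ℤ) (m n : ℕ) :
    cfgWord x i (m + n) = cfgWord x i m ++ cfgWord x (i + m) n := by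
  simp only [cfgWord, List.ofFn_add]
  congr 2 with t
  simp [add_assoc]

lemma cfgWord_succ (x : ℤ → α) (i : ℤ) (k : ℕ) :
    cfgWord x i (k + 1) = x i :: cfgWord x (i + 1) k := by
  simp only [cfgWord, List.ofFn_succ, Fin.val_zero, Fin.val_succ, Nat.cast_zero, add_zero,
    Nat.cast_add, Nat.cast_one]
  congr 2 with t
  ring_nf

lemma cfgWord_shift (x : ℤ → α) (m i : ℤ) (k : ℕ) :
    cfgWord (fun j => x (j + m)) i k = cfgWord x (i + m) k := by
  simp only [cfgWord]
  congr 2 with t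
  ring_nf

lemma cfgWord_isChain {R : α → α → Prop} {x : ℤ → α} (h : ∀ i, R (x i) (x (i + 1))) (i : ℤ)
    (k : ℕ) : (cfgWord x i k).IsChain R := by
  rw [List.isChain_iff_getElem]
  intro t ht
  simpa [add_assoc] using h (i + t)

lemma cfgWord_isInfix (x : ℤ → α) {i : ℤ} {k m m' : ℕ} (h₁ : -(m : ℤ) ≤ i) (h₂ : i + k ≤ m') :
    cfgWord x i k <:+: cfgWord x (-m) (m + m') := by
  obtain ⟨a, ha⟩ : ∃ a : ℕ, i = -m + a := ⟨(i + m).toNat, by omega⟩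
  obtain ⟨b, hb⟩ : ∃ b : ℕ, m + m' = a + (k + b) := ⟨m + m' - a - k, by omega⟩
  rw [hb, cfgWord_add, cfgWord_add, ← ha, ← List.append_assoc]
  exact List.infix_append _ _ _

def rayWord (r : ℕ → α) (i k : ℕ) : List α := List.ofFn fun t : Fin k => r (i + t)

@[simp] lemma length_rayWord (r : ℕ → α) (i k : ℕ) : (rayWord r i k).length = k := by
  simp [rayWord]

@[simp] lemma getElem_rayWord (r : ℕ → α) (i k t : ℕ) (ht : t < (rayWord r i k).length) :
    (rayWord r i k)[t] = r (i + t) := by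
  simp [rayWord]

lemma rayWord_add (r : ℕ → α) (i m n : ℕ) :
    rayWord r i (m + n) = rayWord r i m ++ rayWord r (i + m) n := by
  simp only [rayWord, List.ofFn_add]
  congr 2 with t
  simp [add_assoc]

lemma rayWord_rightRay (x : ℤ → α) (i k : ℕ) : rayWord (rightRay x) i k = cfgWord x i k := by
  simp [rayWord, cfgWord, rightRay]

lemma cfgWord_glue (l r : ℕ → α) (m m' : ℕ) :
    cfgWord (glue l r) (-m) (m + m') = (rayWord l 0 m).reverse ++ rayWord r 0 m' := by
  refine List.ext_getElem (by simp) fun t h₁ _ => ?_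
  simp only [length_cfgWord] at h₁
  rw [getElem_cfgWord, glue]
  rcases lt_or_ge t m with h | h
  · rw [List.getElem_append_left (by simpa using h), List.getElem_reverse, getElem_rayWord,
      if_neg (by omega)]
    congr 1
    simp only [length_rayWord]
    omega
  · rw [List.getElem_append_right (by simpa using h), getElem_rayWord, if_pos (by omega)]
    congr 1
    simp only [List.length_reverse, length_rayWord]
    omega

lemma rayWord_wordThen (u : List α) (r : ℕ → α) (m : ℕ) :
    rayWord (wordThen u r) 0 (u.length + m) = u ++ rayWord r 0 m := by
  refine List.ext_getElem (by simp) fun t h₁ _ => ?_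
  simp only [length_rayWord] at h₁
  rw [getElem_rayWord, wordThen]
  rcases lt_or_ge t u.length with h | h
  · rw [List.getElem_append_left h, dif_pos (by omega)]
    simp
  · rw [List.getElem_append_right h, getElem_rayWord, dif_neg (by omega)]
    simp

end Words

section Subshift

variable {α : Type*} {Y : Set (ℤ → α)}

def IsShiftInvariant (Y : Set (ℤ → α)) : Prop := ∀ y ∈ Y, ∀ m : ℤ, (fun i => y (i + m)) ∈ Y

lemma IsSubshift.isShiftInvariant (hY : IsSubshift Y) : IsShiftInvariant Y := by
  intro y hy m
  induction m using Int.induction_on with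
  | zero => simpa using hy
  | succ k ih =>
    convert hY.2.1 _ ih using 1
    funext i
    simp only [shiftMap]
    ring_nf
  | pred k ih =>
    convert hY.2.2.1 _ ih using 1
    funext i
    simp only [shiftInvMap]
    ring_nf

lemma cfgWord_mem_lang {y : ℤ → α} (hy : y ∈ Y) (i : ℤ) (k : ℕ) : cfgWord y i k ∈ lang Y :=
  ⟨y, hy, i, by simp⟩

lemma mem_lang_of_isInfix {u v : List α} (huv : u <:+: v) (hv : v ∈ lang Y) : u ∈ lang Y := by
  obtain ⟨x, hx, i, hv⟩ := hv
  obtain ⟨s, t, rfl⟩ := huv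
  rw [List.length_append, List.length_append, add_assoc, cfgWord_add, cfgWord_add,
    List.append_assoc] at hv
  exact ⟨x, hx, _, (List.append_inj (List.append_inj hv (by simp)).2 (by simp)).1⟩

lemma IsSubshift.mem_of_forall_cfgWord_mem (hY : IsSubshift Y) {x : ℤ → α}
    (h : ∀ i k, cfgWord x i k ∈ lang Y) : x ∈ Y := by
  refine hY.2.2.2 x fun n => ?_
  obtain ⟨y, hy, j, hw⟩ := h (-n) (2 * n + 1)
  refine ⟨fun i => y (i + (j + n)), hY.isShiftInvariant y hy _, fun i hi => ?_⟩
  rw [abs_le] at hi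
  obtain ⟨t, rfl⟩ : ∃ t : ℕ, i = -n + t := ⟨(i + n).toNat, by omega⟩
  rw [length_cfgWord] at hw
  have := List.getElem_of_eq hw (show t < (cfgWord y j (2 * n + 1)).length by simp; omega)
  rw [getElem_cfgWord, getElem_cfgWord] at this
  rw [← this]
  exact congrArg y (by ring)

end Subshift

section Rays

variable {α : Type*} {Y : Set (ℤ → α)}

@[simp] lemma leftRay_glue (l r : ℕ → α) : leftRay (glue l r) = l := by
  funext n
  simp only [leftRay, glue]
  rw [if_neg (by omega)]
  congr 1
  omega

@[simp] lemma rightRay_glue (l r : ℕ → α) : rightRay (glue l r) = r := by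
  funext n
  simp [rightRay, glue]

@[simp] lemma glue_leftRay_rightRay (x : ℤ → α) : glue (leftRay x) (rightRay x) = x := by
  funext i
  simp only [glue, leftRay, rightRay]
  split <;> congr 1 <;> omega

lemma glue_neg (l r : ℕ → α) (n : ℕ) : glue l r (-1 - n) = l n := by
  rw [glue, if_neg (by omega)]
  congr 1
  omega

lemma glue_natCast (l r : ℕ → α) (n : ℕ) : glue l r n = r n := by
  simp [glue]

lemma foll_subset_follW (hY : IsShiftInvariant Y) {l : ℕ → α} {w : List α}
    (hsuf : raySuffix l w) : foll Y l ⊆ follW Y w := by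
  intro r hr
  refine ⟨fun i => glue l r (i + -w.length), hY _ hr _, funext fun n => ?_⟩
  simp only [rightRay, wordThen]
  split
  · next h =>
    rw [glue, if_neg (by omega), ← hsuf ⟨n, h⟩]
    congr 1
    simp only
    omega
  · next h =>
    rw [glue, if_pos (by omega)]
    congr 1
    omega

lemma follW_cons_subset (hY : IsShiftInvariant Y) (a : α) (w : List α) :
    follW Y (a :: w) ⊆ follW Y w := by
  rintro r ⟨y, hy, hray⟩
  refine ⟨fun i => y (i + 1), hY y hy 1, funext fun n => ?_⟩
  have hn := congrFun hray (n + 1)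
  simp only [rightRay, Nat.cast_add, Nat.cast_one] at hn
  show y (n + 1) = _
  rw [hn]
  simp [wordThen]

lemma occursInLeft_iff {l : ℕ → α} {w : List α} :
    occursInLeft l w ↔ ∃ j, rayWord l j w.length = w.reverse := by
  refine exists_congr fun j => ⟨fun h => List.ext_getElem (by simp) fun t h₁ h₂ => ?_,
    fun h k => ?_⟩
  · simp only [length_rayWord] at h₁
    have := h ⟨w.length - 1 - t, by omega⟩
    rw [List.get_eq_getElem] at this
    rw [getElem_rayWord, List.getElem_reverse, ← this]
    congr 1
    simp only
    omega
  · have hk : w.length - 1 - k < (rayWord l j w.length).length := by simp; omega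
    have := List.getElem_of_eq h hk
    rw [getElem_rayWord, List.getElem_reverse] at this
    rw [this, List.get_eq_getElem]
    congr 1
    omega

lemma langL_leftRay_subset_lang {z : ℤ → α} (hz : z ∈ Y) : langL (leftRay z) ⊆ lang Y := by
  rintro u ⟨j, hj⟩
  refine ⟨z, hz, -(j + u.length), List.ext_getElem (by simp) fun t h₁ h₂ => ?_⟩
  have := hj ⟨t, h₂⟩
  rw [List.get_eq_getElem] at this
  rw [getElem_cfgWord, ← this, leftRay]
  congr 1
  simp only
  omega

lemma exists_occursInLeft_ge (hY : TransitiveShift Y) {l : ℕ → α} (hl : langL l = lang Y)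
    {v : List α} (hv : v ∈ lang Y) (N : ℕ) : ∃ j, N ≤ j ∧ rayWord l j v.length = v.reverse := by
  have hpre : occursInLeft l (rayWord l 0 N).reverse := occursInLeft_iff.mpr ⟨0, by simp⟩
  obtain ⟨t, ht⟩ := hY v hv _ (by rw [← hl]; exact hpre)
  rw [← hl] at ht
  obtain ⟨j, hj⟩ := occursInLeft_iff.mp ht
  have hlen : (v ++ t ++ (rayWord l 0 N).reverse).length = N + (t.length + v.length) := by
    simp only [List.length_append, List.length_reverse, length_rayWord]
    omega
  rw [hlen, rayWord_add, rayWord_add] at hj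
  simp only [List.reverse_append, List.reverse_reverse, List.append_assoc] at hj
  exact ⟨j + N + t.length, by omega,
    List.append_inj_right' (List.append_inj_right' hj (by simp)) (by simp)⟩

lemma exists_cons_mem_lang {w : List α} (hw : w ∈ lang Y) : ∃ a, a :: w ∈ lang Y := by
  obtain ⟨x, hx, i, hw⟩ := hw
  refine ⟨x (i - 1), x, hx, i - 1, ?_⟩
  rw [List.length_cons, cfgWord_succ, sub_add_cancel, hw]

lemma SyncWord.cons (hY : IsShiftInvariant Y) {w : List α} (hs : SyncWord Y w) {a : α}
    (ha : a :: w ∈ lang Y) : SyncWord Y (a :: w) := by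
  refine ⟨ha, fun l hl hsuf => (foll_subset_follW hY hsuf).antisymm ?_⟩
  have hsuf' : raySuffix l w := fun k => by
    simpa [Nat.sub_sub, Nat.add_comm 1] using hsuf k.succ
  exact (follW_cons_subset hY a w).trans (hs.2 l hl hsuf').ge

end Rays

section StarRays

variable {β : Type*}

def IsStarRay (r : ℕ → Option β) : Prop := ∀ n, ¬(r n = none ∧ r (n + 1) = none)

def IsStarEmbedding (ψ : ℕ → ℕ) : Prop :=
  ψ 0 ≤ 1 ∧ ∀ n, ψ (n + 1) = ψ n + 1 ∨ ψ (n + 1) = ψ n + 2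

open Classical in
noncomputable def starRay (s : ℕ → β) (ψ : ℕ → ℕ) : ℕ → Option β :=
  fun i => if h : ∃ n, ψ n = i then some (s h.choose) else none

lemma isStarEmbedding_id : IsStarEmbedding id := ⟨zero_le_one, fun _ => Or.inl rfl⟩

namespace IsStarEmbedding

variable {ψ : ℕ → ℕ}

lemma strictMono (hψ : IsStarEmbedding ψ) : StrictMono ψ :=
  strictMono_nat_of_lt_succ fun n => by rcases hψ.2 n with h | h <;> omega

lemma exists_le_lt_succ (hψ : IsStarEmbedding ψ) {i : ℕ} (hi : ψ 0 ≤ i) :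
    ∃ n, ψ n ≤ i ∧ i < ψ (n + 1) := by
  classical
  have hex : ∃ n, i < ψ n := ⟨i + 1, (Nat.lt_succ_self i).trans_le (hψ.strictMono.le_apply)⟩
  have hpos : Nat.find hex ≠ 0 := fun h0 => by
    have := Nat.find_spec hex
    rw [h0] at this
    omega
  obtain ⟨n, hn⟩ := Nat.exists_eq_succ_of_ne_zero hpos
  exact ⟨n, not_lt.mp (Nat.find_min hex (by omega)), by simpa [hn] using Nat.find_spec hex⟩

lemma apply_ne_of_lt_of_lt (hψ : IsStarEmbedding ψ) {n i : ℕ} (h₁ : ψ n < i)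
    (h₂ : i < ψ (n + 1)) (m : ℕ) : ψ m ≠ i := by
  rintro rfl
  rcases lt_or_ge m (n + 1) with h | h
  · exact (hψ.strictMono.monotone (Nat.lt_succ_iff.mp h)).not_gt h₁
  · exact (hψ.strictMono.monotone h).not_gt h₂

lemma cases_of_forall_ne (hψ : IsStarEmbedding ψ) {i : ℕ} (hi : ∀ n, ψ n ≠ i) :
    (i = 0 ∧ ψ 0 = 1) ∨ ∃ n, ψ (n + 1) = ψ n + 2 ∧ i = ψ n + 1 := by
  rcases lt_or_ge i (ψ 0) with h | h
  · exact Or.inl (by have := hψ.1; omega)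
  · obtain ⟨n, h₁, h₂⟩ := hψ.exists_le_lt_succ h
    have := hi n
    rcases hψ.2 n with g | g
    · omega
    · exact Or.inr ⟨n, g, by omega⟩

end IsStarEmbedding

variable {s : ℕ → β} {ψ : ℕ → ℕ}

lemma starRay_apply (hψ : IsStarEmbedding ψ) (n : ℕ) : starRay s ψ (ψ n) = some (s n) := by
  have hex : ∃ m, ψ m = ψ n := ⟨n, rfl⟩
  rw [starRay, dif_pos hex, hψ.strictMono.injective hex.choose_spec]

lemma starRay_eq_none {i : ℕ} (hi : ∀ n, ψ n ≠ i) : starRay s ψ i = none := by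
  rw [starRay, dif_neg (not_exists.mpr hi)]

lemma exists_eq_of_starRay_ne_none {i : ℕ} (h : starRay s ψ i ≠ none) : ∃ n, ψ n = i := by
  by_contra hc
  exact h (starRay_eq_none (not_exists.mp hc))

lemma isStarRay_starRay (hψ : IsStarEmbedding ψ) : IsStarRay (starRay s ψ) := by
  rintro i ⟨h₁, h₂⟩
  have hne : ∀ {j}, starRay s ψ j = none → ∀ n, ψ n ≠ j := fun hj n hn => by
    rw [← hn, starRay_apply hψ] at hj
    exact Option.some_ne_none _ hj
  rcases hψ.cases_of_forall_ne (hne h₁) with ⟨rfl, h0⟩ | ⟨n, hg, rfl⟩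
  · exact hne h₂ 0 (by omega)
  · exact hne h₂ (n + 1) (by omega)

lemma IsStarRay.exists_eq_starRay {r : ℕ → Option β} (hr : IsStarRay r) :
    ∃ s ψ, IsStarEmbedding ψ ∧ r = starRay s ψ := by
  classical
  let ψ : ℕ → ℕ := fun n => Nat.rec (if r 0 = none then 1 else 0)
    (fun _ p => if r (p + 1) = none then p + 2 else p + 1) n
  have hψ0 : ψ 0 = if r 0 = none then 1 else 0 := rfl
  have hψs : ∀ n, ψ (n + 1) = if r (ψ n + 1) = none then ψ n + 2 else ψ n + 1 := fun _ => rfl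
  have hψ : IsStarEmbedding ψ :=
    ⟨by rw [hψ0]; split <;> omega, fun n => by rw [hψs n]; split <;> simp⟩
  have hsome : ∀ n, r (ψ n) ≠ none := by
    rintro (_ | m)
    · rw [hψ0]
      split_ifs with h
      · exact fun h' => hr 0 ⟨h, h'⟩
      · exact h
    · rw [hψs m]
      split_ifs with h
      · exact fun h' => hr (ψ m + 1) ⟨h, h'⟩
      · exact h
  refine ⟨fun n => (r (ψ n)).get (Option.ne_none_iff_isSome.mp (hsome n)), ψ, hψ,
    funext fun i => ?_⟩
  rcases em (∃ n, ψ n = i) with hi | hi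
  · obtain ⟨n, rfl⟩ := hi
    simp [starRay_apply hψ]
  · rw [starRay_eq_none (not_exists.mp hi)]
    rcases hψ.cases_of_forall_ne (not_exists.mp hi) with ⟨rfl, h0⟩ | ⟨n, hg, rfl⟩
    · by_contra h
      rw [hψ0, if_neg h] at h0
      omega
    · by_contra h
      rw [hψs n, if_neg h] at hg
      omega

lemma eq_self_of_starRay_ne_none (hψ : IsStarEmbedding ψ) {k : ℕ}
    (hk : ∀ n < k, starRay s ψ n ≠ none) : ∀ n < k, ψ n = n := by
  intro n
  induction n using Nat.strong_induction_on with
  | _ n ih =>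
    intro hn
    obtain ⟨m, hm⟩ := exists_eq_of_starRay_ne_none (hk n hn)
    rcases lt_trichotomy m n with h | rfl | h
    · have := ih m h (h.trans hn)
      omega
    · exact hm
    · have := hψ.strictMono.le_apply (x := m)
      omega

lemma reduceOption_rayWord_starRay (hψ : IsStarEmbedding ψ) (k : ℕ) :
    (rayWord (starRay s ψ) 0 (ψ k)).reduceOption = rayWord s 0 k := by
  induction k with
  | zero =>
    have h0 : ψ 0 = 0 ∨ ψ 0 = 1 := by have := hψ.1; omega
    rcases h0 with h0 | h0
    · simp [h0, rayWord]
    · have : starRay s ψ 0 = none :=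
        starRay_eq_none fun n hn => by have := hψ.strictMono.monotone (Nat.zero_le n); omega
      simp [h0, rayWord, this]
  | succ k ih =>
    have hgap : (rayWord (starRay s ψ) (ψ k) (ψ (k + 1) - ψ k)).reduceOption = [s k] := by
      rcases hψ.2 k with g | g
      · simp [g, rayWord, starRay_apply hψ]
      · have : starRay s ψ (ψ k + 1) = none :=
          starRay_eq_none (hψ.apply_ne_of_lt_of_lt (n := k) (by omega) (by omega))
        simp [g, rayWord, List.ofFn_succ, starRay_apply hψ, this]
    have hle : ψ k ≤ ψ (k + 1) := hψ.strictMono.monotone (Nat.le_succ k)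
    rw [← Nat.add_sub_cancel' hle, rayWord_add, List.reduceOption_append, ih, zero_add, hgap,
      rayWord_add]
    simp [rayWord]

lemma raySuffix_starRay_map_some_iff (hψ : IsStarEmbedding ψ) {w : List β} :
    raySuffix (starRay s ψ) (w.map some) ↔ (∀ n < w.length, ψ n = n) ∧ raySuffix s w := by
  have hsuf : ∀ (hid : ∀ n < w.length, ψ n = n) (k : Fin w.length),
      starRay s ψ (w.length - 1 - k) = some (s (w.length - 1 - k)) := fun hid k => by
    conv_lhs => rw [← hid (w.length - 1 - k) (by omega)]
    exact starRay_apply hψ _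
  constructor
  · intro h
    have hid : ∀ n < w.length, ψ n = n := by
      refine eq_self_of_starRay_ne_none (s := s) hψ fun n hn => ?_
      have := h ⟨w.length - 1 - n, by simp; omega⟩
      simp only [List.length_map, List.get_eq_getElem, List.getElem_map] at this
      rw [show w.length - 1 - (w.length - 1 - n) = n by omega] at this
      simp [this]
    refine ⟨hid, fun k => ?_⟩
    have := h ⟨k, by simp⟩
    simp only [List.length_map, List.get_eq_getElem, List.getElem_map, hsuf hid k] at this
    simpa using this
  · rintro ⟨hid, h⟩ k
    have := hsuf hid ⟨k, by simpa using k.2⟩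
    simp only [List.length_map] at this ⊢
    rw [this, h ⟨k, by simpa using k.2⟩]
    simp

lemma reduceOption_map_some (l : List β) : (l.map some).reduceOption = l := by
  simp [List.reduceOption, List.filterMap_map]

lemma rayWord_some (s : ℕ → β) (i k : ℕ) :
    rayWord (fun n => some (s n)) i k = (rayWord s i k).map some :=
  List.ofFn_comp' _ some

def RayReducesTo (r : ℕ → Option β) (s : ℕ → β) : Prop :=
  ∀ m, ∃ m' ≥ m, ∃ k, (rayWord r 0 m').reduceOption = rayWord s 0 k

lemma rayReducesTo_starRay (hψ : IsStarEmbedding ψ) : RayReducesTo (starRay s ψ) s :=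
  fun m => ⟨ψ m, hψ.strictMono.le_apply, m, reduceOption_rayWord_starRay hψ m⟩

lemma rayReducesTo_some (s : ℕ → β) : RayReducesTo (fun n => some (s n)) s :=
  fun m => ⟨m, le_rfl, m, by rw [rayWord_some, reduceOption_map_some]⟩

lemma rayReducesTo_wordThen {u : List (Option β)} {k : ℕ} (hu : u.reduceOption = rayWord s 0 k) :
    RayReducesTo (wordThen u fun n => some (s (k + n))) s := by
  refine fun m => ⟨u.length + m, Nat.le_add_left m _, k + m, ?_⟩
  rw [rayWord_wordThen, List.reduceOption_append, hu, rayWord_add, rayWord_some,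
    reduceOption_map_some]
  simp [rayWord]

lemma glue_noAdjacentNone {L R : ℕ → Option β} (hL : IsStarRay L) (hR : IsStarRay R)
    (h0 : L 0 ≠ none ∨ R 0 ≠ none) (i : ℤ) : ¬(glue L R i = none ∧ glue L R (i + 1) = none) := by
  obtain ⟨n, rfl⟩ | ⟨n, rfl⟩ : (∃ n : ℕ, i = n) ∨ ∃ n : ℕ, i = -1 - n := by
    rcases le_or_gt 0 i with h | h
    · exact Or.inl ⟨i.toNat, by omega⟩
    · exact Or.inr ⟨(-1 - i).toNat, by omega⟩
  · exact_mod_cast glue_natCast L R n ▸ glue_natCast L R (n + 1) ▸ hR n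
  · cases n with
    | zero =>
      have h₁ : glue L R (-1 - (0 : ℕ)) = L 0 := glue_neg L R 0
      have h₂ : glue L R (-1 - (0 : ℕ) + 1) = R 0 := by simpa using glue_natCast L R 0
      rw [h₁, h₂]
      tauto
    | succ m =>
      rw [show (-1 - (m + 1 : ℕ) + 1 : ℤ) = -1 - m by push_cast; ring, glue_neg, glue_neg, and_comm]
      exact hL m

lemma isStarRay_some (s : ℕ → β) : IsStarRay fun n => some (s n) := by
  simp [IsStarRay]

lemma isStarRay_wordThen {u : List (Option β)} (hu : u.IsChain fun a b => ¬(a = none ∧ b = none))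
    (s : ℕ → β) : IsStarRay (wordThen u fun n => some (s n)) := by
  rintro n ⟨h₁, h₂⟩
  by_cases hn : n + 1 < u.length
  · rw [wordThen, dif_pos (by omega)] at h₁
    rw [wordThen, dif_pos hn] at h₂
    exact List.isChain_iff_getElem.mp hu n hn ⟨h₁, h₂⟩
  · simp [wordThen, hn] at h₂

lemma isChain_map_some (t : List β) :
    (t.map some).IsChain fun a b => ¬(a = none ∧ b = none) :=
  List.isChain_iff_getElem.mpr fun _ _ => by simp

lemma isChain_append_of_head_ne_none {l₁ l₂ : List (Option β)}
    (h₁ : l₁.IsChain fun a b => ¬(a = none ∧ b = none))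
    (h₂ : l₂.IsChain fun a b => ¬(a = none ∧ b = none)) (h : ∀ b ∈ l₂.head?, b ≠ none) :
    (l₁ ++ l₂).IsChain fun a b => ¬(a = none ∧ b = none) :=
  h₁.append h₂ fun _ _ b hb ⟨_, hb'⟩ => h b hb hb'

open Classical in
noncomputable def gapEmbedding (T : Set ℕ) : ℕ → ℕ
  | 0 => 0
  | n + 1 => gapEmbedding T n + if n ∈ T then 2 else 1

open Classical in
lemma gapEmbedding_succ (T : Set ℕ) (n : ℕ) :
    gapEmbedding T (n + 1) = gapEmbedding T n + if n ∈ T then 2 else 1 :=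
  rfl

lemma isStarEmbedding_gapEmbedding (T : Set ℕ) : IsStarEmbedding (gapEmbedding T) :=
  ⟨zero_le_one, fun n => by rw [gapEmbedding_succ]; split_ifs <;> simp⟩

lemma gapEmbedding_eq_self {T : Set ℕ} {n : ℕ} (h : ∀ m ∈ T, n ≤ m) : gapEmbedding T n = n := by
  induction n with
  | zero => rfl
  | succ n ih =>
    rw [gapEmbedding_succ, ih fun m hm => (h m hm).trans' n.le_succ,
      if_neg fun hn => (h n hn).not_gt n.lt_succ_self]

lemma gapEmbedding_add_apply_sub {T : Set ℕ} {θ : ℕ → ℕ} (hθ : IsStarEmbedding θ) {j q : ℕ}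
    (hT : ∀ t < q, j + t ∈ T ↔ θ (q - t) = θ (q - (t + 1)) + 2) :
    ∀ t ≤ q, gapEmbedding T (j + t) + θ (q - t) = gapEmbedding T j + θ q := by
  intro t
  induction t with
  | zero => simp
  | succ t ih =>
    intro ht
    have hgap := hθ.2 (q - (t + 1))
    rw [show q - (t + 1) + 1 = q - t by omega] at hgap
    rw [← ih (by omega), ← add_assoc, gapEmbedding_succ]
    split_ifs with h
    · have := (hT t ht).mp h
      omega
    · have := mt (hT t ht).mpr h
      omega

lemma starRay_reflect {l b : ℕ → β} {ψ θ : ℕ → ℕ} (hψ : IsStarEmbedding ψ)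
    (hθ : IsStarEmbedding θ) {j q c : ℕ} (hpos : ∀ t ≤ q, ψ (j + t) + θ (q - t) = c)
    (hval : ∀ t ≤ q, l (j + t) = b (q - t)) {k : ℕ} (hk₁ : θ 0 ≤ k) (hk₂ : k ≤ θ q) :
    starRay l ψ (c - k) = starRay b θ k := by
  obtain ⟨n, hn₁, hn₂⟩ := hθ.exists_le_lt_succ hk₁
  have hnq : n ≤ q := hθ.strictMono.le_iff_le.mp (hn₁.trans hk₂)
  have hc := hpos (q - n) (Nat.sub_le q n)
  rw [Nat.sub_sub_self hnq] at hc
  rcases hn₁.eq_or_lt with rfl | hlt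
  · rw [← hc, Nat.add_sub_cancel, starRay_apply hψ, starRay_apply hθ, hval _ (Nat.sub_le q n),
      Nat.sub_sub_self hnq]
  · have hnq' : n < q := hθ.strictMono.lt_iff_lt.mp (hlt.trans_le hk₂)
    have hc' := hpos (q - n - 1) (by omega)
    rw [show q - (q - n - 1) = n + 1 by omega] at hc'
    rw [starRay_eq_none (hθ.apply_ne_of_lt_of_lt hlt hn₂), starRay_eq_none]
    refine hψ.apply_ne_of_lt_of_lt (n := j + (q - n - 1)) (by omega) ?_
    rw [show j + (q - n - 1) + 1 = j + (q - n) by omega]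
    omega

end StarRays

section StarShift

variable {A : Type*} {X : Set (ℤ → A)}

lemma starShift_isShiftInvariant : IsShiftInvariant (starShift X) := fun z hz m =>
  ⟨fun i => by simpa [add_right_comm] using hz.1 (i + m),
    fun i k => by rw [cfgWord_shift]; exact hz.2 _ _⟩

lemma glue_mem_starShift {L R : ℕ → Option A} {sl sr : ℕ → A} (hL : RayReducesTo L sl)
    (hR : RayReducesTo R sr) (hLR : ∀ i, ¬(glue L R i = none ∧ glue L R (i + 1) = none))
    (hX : glue sl sr ∈ X) : glue L R ∈ starShift X := by
  refine ⟨hLR, fun i k => ?_⟩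
  obtain ⟨m, hm, a, ha⟩ := hL (i.natAbs + k)
  obtain ⟨m', hm', b, hb⟩ := hR (i.natAbs + k)
  have hinf := cfgWord_isInfix (glue L R) (i := i) (k := k) (m := m) (m' := m') (by omega)
    (by omega)
  refine mem_lang_of_isInfix (hinf.filterMap id) ?_
  rw [← List.reduceOption, cfgWord_glue, List.reduceOption_append, List.reduceOption,
    List.filterMap_reverse, ← List.reduceOption, ha, hb, ← cfgWord_glue]
  exact cfgWord_mem_lang hX _ _

lemma glue_starRay_mem_starShift {sl sr : ℕ → A} {ψl ψr : ℕ → ℕ} (hψl : IsStarEmbedding ψl)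
    (hψr : IsStarEmbedding ψr) (h0 : ψl 0 = 0) (hX : glue sl sr ∈ X) :
    glue (starRay sl ψl) (starRay sr ψr) ∈ starShift X := by
  have hl0 := starRay_apply (s := sl) hψl 0
  rw [h0] at hl0
  exact glue_mem_starShift (rayReducesTo_starRay hψl) (rayReducesTo_starRay hψr)
    (glue_noAdjacentNone (isStarRay_starRay hψl) (isStarRay_starRay hψr) (Or.inl (by simp [hl0])))
    hX

lemma IsSubshift.exists_starRay_of_mem_starShift (hX : IsSubshift X) {z : ℤ → Option A}
    (hz : z ∈ starShift X) :
    ∃ sl ψl sr ψr, IsStarEmbedding ψl ∧ IsStarEmbedding ψr ∧ leftRay z = starRay sl ψl ∧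
      rightRay z = starRay sr ψr ∧ glue sl sr ∈ X := by
  have hL : IsStarRay (leftRay z) := fun n h => hz.1 (-1 - (n + 1 : ℕ)) <| by
    rw [show (-1 - (n + 1 : ℕ) + 1 : ℤ) = -1 - n by push_cast; ring]
    exact h.symm
  have hR : IsStarRay (rightRay z) := fun n h => hz.1 n (by exact_mod_cast h)
  obtain ⟨sl, ψl, hψl, hl⟩ := hL.exists_eq_starRay
  obtain ⟨sr, ψr, hψr, hr⟩ := hR.exists_eq_starRay
  refine ⟨sl, ψl, sr, ψr, hψl, hψr, hl, hr, hX.mem_of_forall_cfgWord_mem fun i k => ?_⟩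
  set n := i.natAbs + k
  refine mem_lang_of_isInfix (cfgWord_isInfix (glue sl sr) (m := n) (m' := n) (by omega)
    (by omega)) ?_
  have := hz.2 (-(ψl n)) (ψl n + ψr n)
  rwa [← glue_leftRay_rightRay z, hl, hr, cfgWord_glue, List.reduceOption_append,
    List.reduceOption, List.filterMap_reverse, ← List.reduceOption,
    reduceOption_rayWord_starRay hψl, reduceOption_rayWord_starRay hψr, ← cfgWord_glue] at this

lemma IsSubshift.mem_lang_starShift_iff (hX : IsSubshift X) {u : List (Option A)} :
    u ∈ lang (starShift X) ↔
      u.IsChain (fun a b => ¬(a = none ∧ b = none)) ∧ u.reduceOption ∈ lang X := by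
  constructor
  · rintro ⟨y, hy, i, hu⟩
    rw [← hu]
    exact ⟨cfgWord_isChain hy.1 i _, hy.2 i _⟩
  · rintro ⟨hch, x, hx, j, hxu⟩
    set k := u.reduceOption.length
    set x' : ℤ → A := fun i => x (i + j)
    have hu : u.reduceOption = rayWord (rightRay x') 0 k := by
      rw [rayWord_rightRay, cfgWord_shift, Nat.cast_zero, zero_add, hxu]
    have hmem := glue_mem_starShift (X := X) (rayReducesTo_some (leftRay x'))
      (rayReducesTo_wordThen hu)
      (glue_noAdjacentNone (isStarRay_some _) (isStarRay_wordThen hch _) (Or.inl (by simp)))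
      (by simpa using hX.isShiftInvariant x hx j)
    refine ⟨_, hmem, 0, ?_⟩
    have := cfgWord_glue (fun n => some (leftRay x' n))
      (wordThen u fun n => some (rightRay x' (k + n))) 0 u.length
    rw [Nat.cast_zero, neg_zero, zero_add] at this
    rw [this, ← add_zero u.length, rayWord_wordThen]
    simp [rayWord]

lemma IsSubshift.map_some_mem_lang_starShift (hX : IsSubshift X) {w : List A} (hw : w ∈ lang X) :
    w.map some ∈ lang (starShift X) :=
  hX.mem_lang_starShift_iff.mpr ⟨isChain_map_some w, by rwa [reduceOption_map_some]⟩

lemma exists_some_cons_mem_lang_starShift {v : List (Option A)}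
    (hv : v ∈ lang (starShift X)) : ∃ a p, some a :: (p ++ v) ∈ lang (starShift X) := by
  obtain ⟨y, hy, i, hv⟩ := hv
  rw [← hv]
  cases h : y (i - 1) with
  | some a =>
    refine ⟨a, [], y, hy, i - 1, ?_⟩
    rw [List.nil_append, List.length_cons, length_cfgWord, cfgWord_succ, h, sub_add_cancel]
  | none =>
    obtain ⟨a, ha⟩ := Option.ne_none_iff_exists'.mp fun h' =>
      hy.1 (i - 2) ⟨h', by rwa [show i - 2 + 1 = i - 1 by ring]⟩
    refine ⟨a, [none], y, hy, i - 2, ?_⟩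
    rw [List.singleton_append, List.length_cons, List.length_cons, length_cfgWord, cfgWord_succ,
      cfgWord_succ, ha, show i - 2 + 1 = i - 1 by ring, h, sub_add_cancel]

lemma IsSubshift.transitiveShift_starShift (hX : IsSubshift X) (hT : TransitiveShift X) :
    TransitiveShift (starShift X) := by
  intro u hu v hv
  -- The bridge from `X` may be empty, so `v` is first made to start with a letter.
  obtain ⟨a, p, hv'⟩ := exists_some_cons_mem_lang_starShift hv
  rw [hX.mem_lang_starShift_iff] at hu hv'
  obtain ⟨t, ht⟩ := hT _ hu.2 _ hv'.2
  refine ⟨t.map some ++ some a :: p, (hX.mem_lang_starShift_iff).mpr ⟨?_, ?_⟩⟩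
  · have hsome : ∀ b ∈ (t.map some ++ some a :: (p ++ v)).head?, b ≠ none := by
      cases t <;> simp
    have hmid := isChain_append_of_head_ne_none (l₁ := t.map some)
      (isChain_map_some t) hv'.1 (by simp)
    simpa using isChain_append_of_head_ne_none hu.1 hmid hsome
  · simpa [List.reduceOption_append, reduceOption_map_some] using ht

end StarShift

section Followers

variable {A : Type*} {X : Set (ℤ → A)}

lemma IsSubshift.exists_starRay_of_mem_follW_starShift (hX : IsSubshift X) {w : List A}
    {r : ℕ → Option A} (hr : r ∈ follW (starShift X) (w.map some)) :
    ∃ sr ψr, IsStarEmbedding ψr ∧ r = starRay sr ψr ∧ sr ∈ follW X w := by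
  obtain ⟨y, hy, hray⟩ := hr
  set z : ℤ → Option A := fun i => y (i + w.length)
  have hzr : rightRay z = r := funext fun n => by
    simpa [rightRay, wordThen] using congrFun hray (n + w.length)
  have hzl : raySuffix (leftRay z) (w.map some) := fun k => by
    have := congrFun hray k
    have hk : (k : ℕ) < w.length := by simpa using k.2
    simp only [rightRay, wordThen, dif_pos k.2] at this
    simp only [leftRay, z, List.length_map]
    rw [show -1 - ((w.length - 1 - k : ℕ) : ℤ) + w.length = (k : ℕ) by omega, this]
  obtain ⟨sl, ψl, sr, ψr, hψl, hψr, hl, hr, hglue⟩ :=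
    hX.exists_starRay_of_mem_starShift (starShift_isShiftInvariant y hy _)
  rw [hl, raySuffix_starRay_map_some_iff hψl] at hzl
  exact ⟨sr, ψr, hψr, hzr ▸ hr, foll_subset_follW hX.isShiftInvariant hzl.2 hglue⟩

lemma IsSubshift.foll_starShift_starRay (hX : IsSubshift X) {w : List A} {sl : ℕ → A}
    {ψ : ℕ → ℕ} (hψ : IsStarEmbedding ψ) (h0 : ψ 0 = 0)
    (hsuf : raySuffix (starRay sl ψ) (w.map some)) (h : follW X w ⊆ foll X sl) :
    foll (starShift X) (starRay sl ψ) = follW (starShift X) (w.map some) := by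
  refine (foll_subset_follW starShift_isShiftInvariant hsuf).antisymm fun r hr => ?_
  obtain ⟨sr, ψr, hψr, rfl, hsr⟩ := hX.exists_starRay_of_mem_follW_starShift hr
  exact glue_starRay_mem_starShift hψ hψr h0 (h hsr)

lemma IsSubshift.syncWord_starShift (hX : IsSubshift X) {w : List A} (hw : w ≠ [])
    (hs : SyncWord X w) : SyncWord (starShift X) (w.map some) := by
  refine ⟨hX.map_some_mem_lang_starShift hs.1, ?_⟩
  rintro _ ⟨z, hz, rfl⟩ hsuf
  obtain ⟨sl, ψl, sr, -, hψl, -, hl, -, hglue⟩ := hX.exists_starRay_of_mem_starShift hz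
  rw [hl] at hsuf ⊢
  obtain ⟨hid, hsufl⟩ := (raySuffix_starRay_map_some_iff hψl).mp hsuf
  have hsl : sl ∈ LeftRays X := ⟨_, hglue, leftRay_glue sl sr⟩
  exact hX.foll_starShift_starRay hψl (hid 0 (List.length_pos_iff.mpr hw)) hsuf
    (hs.2 sl hsl hsufl).ge

end Followers

section DenseStarRay

variable {A : Type*} {X : Set (ℤ → A)}

lemma exists_set_forall_of_forall_window {Q : ℕ → Set ℕ → Prop}
    (h : ∀ n N, ∃ j ≥ N, ∃ q, ∃ P : Set ℕ,
      ∀ T : Set ℕ, (∀ m ∈ Set.Ico j (j + q), m ∈ T ↔ m ∈ P) → Q n T) (N : ℕ) :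
    ∃ T : Set ℕ, (∀ m ∈ T, N ≤ m) ∧ ∀ n, Q n T := by
  choose J hJ L P hP using h
  obtain ⟨s, hs0, hs⟩ : ∃ s : ℕ → ℕ, s 0 = N ∧ ∀ n, s (n + 1) = J n (s n) + L n (s n) :=
    ⟨fun n => Nat.rec N (fun n a => J n a + L n a) n, rfl, fun _ => rfl⟩
  have hmono : Monotone s := monotone_nat_of_le_succ fun n => by
    have := hJ n (s n)
    have := hs n
    omega
  set W : ℕ → Set ℕ := fun n => Set.Ico (J n (s n)) (J n (s n) + L n (s n))
  have hW : ∀ n, ∀ m ∈ W n, s n ≤ m ∧ m < s (n + 1) := fun n m hm => by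
    have := hJ n (s n)
    have := hs n
    simp only [W, Set.mem_Ico] at hm
    omega
  have hdisj : ∀ n n' m, m ∈ W n → m ∈ W n' → n' = n := by
    intro n n' m hm hm'
    by_contra hne
    have := hW n m hm
    have := hW n' m hm'
    rcases lt_or_gt_of_ne hne with h | h
    · have := hmono (show n' + 1 ≤ n by omega)
      omega
    · have := hmono (show n + 1 ≤ n' by omega)
      omega
  refine ⟨{m | ∃ n, m ∈ W n ∧ m ∈ P n (s n)}, ?_, fun n => hP n (s n) _ fun m hm => ?_⟩
  · rintro m ⟨n, hm, -⟩
    have := hmono (Nat.zero_le n)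
    have := hW n m hm
    omega
  · exact ⟨fun ⟨n', hm', h⟩ => hdisj n n' m hm hm' ▸ h, fun h => ⟨n, hm, h⟩⟩

lemma IsSubshift.exists_starRay_window (hX : IsSubshift X) {u : List (Option A)}
    (hu : u ∈ lang (starShift X)) :
    ∃ b θ q, IsStarEmbedding θ ∧ rayWord b 0 (q + 1) ∈ lang X ∧ u.length ≤ θ q ∧
      rayWord (starRay b θ) 1 u.length = u := by
  obtain ⟨y, hy, i, hyu⟩ := hu
  obtain ⟨a, -, b, θ, -, hθ, -, hr, hglue⟩ :=
    hX.exists_starRay_of_mem_starShift (starShift_isShiftInvariant y hy (i - 1))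
  refine ⟨b, θ, u.length, hθ, ?_, hθ.strictMono.le_apply, ?_⟩
  · have := rayWord_rightRay (glue a b) 0 (u.length + 1)
    rw [rightRay_glue] at this
    exact this ▸ cfgWord_mem_lang hglue _ _
  · rw [← hr, rayWord_rightRay, cfgWord_shift, Nat.cast_one, add_sub_cancel, hyu]

lemma IsSubshift.exists_window_occursInLeft_starRay (hX : IsSubshift X) (hT : TransitiveShift X)
    {l : ℕ → A} (hl : langL l = lang X) {u : List (Option A)} (hu : u ∈ lang (starShift X))
    (N : ℕ) : ∃ j ≥ N, ∃ q, ∃ P : Set ℕ, ∀ T : Set ℕ, (∀ m ∈ Set.Ico j (j + q), m ∈ T ↔ m ∈ P) →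
      occursInLeft (starRay l (gapEmbedding T)) u := by
  obtain ⟨b, θ, q, hθ, hb, hqu, hbu⟩ := hX.exists_starRay_window hu
  obtain ⟨j, hjN, hj⟩ := exists_occursInLeft_ge hT hl hb N
  rw [length_rayWord] at hj
  -- `l` is read backwards from `j`, so the gaps of `θ` are laid out in reverse order.
  refine ⟨j, hjN, q, {m | θ (q - (m - j)) = θ (q - (m - j + 1)) + 2}, fun T hT => ?_⟩
  have hval : ∀ t ≤ q, l (j + t) = b (q - t) := fun t ht => by
    have := List.getElem_of_eq hj (show t < (rayWord l j (q + 1)).length by simp; omega)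
    simpa [List.getElem_reverse] using this
  have hpos := gapEmbedding_add_apply_sub (T := T) hθ fun t ht => by
    simpa using hT (j + t) (by simp only [Set.mem_Ico]; omega)
  rw [occursInLeft_iff]
  refine ⟨gapEmbedding T j + θ q - u.length, List.ext_getElem (by simp) fun i h₁ h₂ => ?_⟩
  simp only [length_rayWord] at h₁
  have hk := List.getElem_of_eq hbu (show u.length - 1 - i < (rayWord _ 1 u.length).length by
    simp; omega)
  rw [getElem_rayWord, List.getElem_reverse, ← hk, getElem_rayWord,
    ← starRay_reflect (isStarEmbedding_gapEmbedding T) hθ hpos hval (by have := hθ.1; omega)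
      (by omega)]
  congr 1
  omega

lemma IsSubshift.halfSyncWord_starShift [Finite A] (hX : IsSubshift X) (hT : TransitiveShift X)
    {w : List A} (hw : HalfSyncWord X w) : HalfSyncWord (starShift X) (w.map some) := by
  obtain ⟨hwX, _, ⟨x, hx, rfl⟩, hsuf, hlang, hfoll⟩ := hw
  obtain ⟨U, hU⟩ := exists_surjective_nat (List (Option A))
  obtain ⟨T, hTw, hTU⟩ := exists_set_forall_of_forall_window (Q := fun n T =>
    U n ∈ lang (starShift X) → occursInLeft (starRay (leftRay x) (gapEmbedding T)) (U n))
    (fun n N => by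
      by_cases hu : U n ∈ lang (starShift X)
      · obtain ⟨j, hj, q, P, hP⟩ := hX.exists_window_occursInLeft_starRay hT hlang hu N
        exact ⟨j, hj, q, P, fun T hPT _ => hP T hPT⟩
      · exact ⟨N, le_rfl, 0, ∅, fun _ _ hu' => absurd hu' hu⟩) w.length
  have hψ := isStarEmbedding_gapEmbedding T
  have hid : ∀ n ≤ w.length, gapEmbedding T n = n :=
    fun n hn => gapEmbedding_eq_self fun m hm => hn.trans (hTw m hm)
  have hsuf' : raySuffix (starRay (leftRay x) (gapEmbedding T)) (w.map some) :=
    (raySuffix_starRay_map_some_iff hψ).mpr ⟨fun n hn => hid n hn.le, hsuf⟩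
  have hmem := glue_starRay_mem_starShift (sl := leftRay x) (sr := rightRay x) hψ
    isStarEmbedding_id (hid 0 (Nat.zero_le _)) (by simpa using hx)
  refine ⟨hX.map_some_mem_lang_starShift hwX, _, ⟨_, hmem, leftRay_glue _ _⟩, hsuf', ?_,
    hX.foll_starShift_starRay hψ (hid 0 (Nat.zero_le _)) hsuf' hfoll.ge⟩
  refine (leftRay_glue _ (starRay (rightRay x) id) ▸ langL_leftRay_subset_lang hmem).antisymm
    fun u hu => ?_
  obtain ⟨n, rfl⟩ := hU u
  exact hTU n hu

end DenseStarRay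

theorem stmt19 [Finite A] (X : Set (ℤ → A)) (hX : IsSubshift X) :
    (HalfSynchronized X →
      HalfSynchronized (starShift X) ∧
      ∀ w : List A, HalfSyncWord X w → HalfSyncWord (starShift X) (w.map Option.some)) ∧
    (Synchronized X →
      Synchronized (starShift X) ∧
      ∀ w : List A, w ≠ [] → SyncWord X w → SyncWord (starShift X) (w.map Option.some)) := by
  refine ⟨fun ⟨hT, w₀, hw₀⟩ => ?_, fun ⟨hT, w₀, hw₀⟩ => ?_⟩
  · exact ⟨⟨hX.transitiveShift_starShift hT, _, hX.halfSyncWord_starShift hT hw₀⟩,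
      fun w hw => hX.halfSyncWord_starShift hT hw⟩
  · obtain ⟨a, ha⟩ := exists_cons_mem_lang hw₀.1
    exact ⟨⟨hX.transitiveShift_starShift hT, _,
        hX.syncWord_starShift (List.cons_ne_nil a w₀) (hw₀.cons hX.isShiftInvariant ha)⟩,
      fun w hw hs => hX.syncWord_starShift hw hs⟩

end Paper
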